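/- Let r and s be positive integers such that either (r \equiv 2 (mod 6) and s \equiv 1 (mod 6)) or (r \equiv 5 (mod 6), s \equiv 1 (mod 6), and s \ge 7) (in particular this covers the classical Apéry numbers a_n(2,1)). Then for every nonnegative integer n: (i) a_n(r,s) \equiv 1 (mod 9) iff every digit of n is 0 or 2; (ii) a_n(r,s) \equiv 3 (mod 9) iff the 3-adic expansion of n has exactly one occurrence of the string 01 (including the case of a leading digit 1), no occurrence of the string 11 or 21, and all digits of n not belonging to this occurrence are 0 or 2; (iii) a_n(r,s) \equiv 6 (mod 9) iff the 3-adic expansion of n has exactly one occurrence of the string 21 and all digits of n not belonging to this occurrence are 0 or 2; (iv) in all other cases 9 divides a_n(r,s); in particular a_n(r,s) is never \equiv 2, 4, 5, 7, or 8 (mod 9). -/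

import Mathlib

open Finset

/-- The generalised Apéry numbers `a_n(r,s) = ∑_{k=0}^n C(n,k)^r C(n+k,k)^s`. -/
def apery (r s n : ℕ) : ℕ :=
  ∑ k ∈ Finset.range (n + 1), n.choose k ^ r * (n + k).choose k ^ s

/-- The number of digits among `d 0, …, d m` equal to `v`. -/
def digitCount (d : ℕ → ℕ) (m v : ℕ) : ℕ :=
  ((Finset.range (m + 1)).filter fun i => d i = v).card

/-- The number of occurrences of the string `ab` in the 3-adic expansion with digits
`d 0, …, d m` (using the convention that digits above position `m` are zero): indices `ν`
with `1 ≤ ν ≤ m + 1`, `d ν = a` and `d (ν - 1) = b`. -/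
def occ (d : ℕ → ℕ) (m a b : ℕ) : ℕ :=
  ((Finset.Icc 1 (m + 1)).filter fun ν => d ν = a ∧ d (ν - 1) = b).card

/-- The 3-adic expansion of `n` (digits `d 0, …, d m`) has exactly one occurrence of the
string `ab`, and all digits not belonging to this occurrence are `0` or `2`. -/
def uniqueOcc (d : ℕ → ℕ) (m a b : ℕ) : Prop :=
  occ d m a b = 1 ∧
  ∀ ν ∈ Finset.Icc 1 (m + 1), (d ν = a ∧ d (ν - 1) = b) →
    ∀ i ≤ m, i ≠ ν → i ≠ ν - 1 → (d i = 0 ∨ d i = 2)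

/-!
For the admissible `r` and `s`, the Apéry numbers obey a Lucas-type recursion modulo 9:
`a(3M) ≡ a(3M + 2) ≡ a(M)` and `a(3M + 1) ≡ 3(1 + 2M) a(M)`. To see this, group the summation
index as `k = 3K + κ`. Modulo 9, `C(3a + j, 3b + κ)` is `C(a, b)` times an explicit factor (from
`C(3a, 3b) ≡ C(a, b)` and Pascal's rule), and the three terms `κ = 0, 1, 2` of each group add up
to the claimed multiple of `C(M, K)^r C(M + K, K)^s`.
Running the recursion through the digits gives `a(n) ≡ ∏_{n_i = 1} 3(1 + 2 n_{i+1}) (mod 9)`.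
This is `1` when no digit is `1`. With a single digit `1` it is `3`, `0` or `6` according as the
next digit is `0`, `1` or `2`, and it is `0` as soon as two digits equal `1`.
-/

theorem Nat.Prime.dvd_choose_of_mod_lt {p n k : ℕ} (hp : p.Prime) (h : n % p < k % p) :
    p ∣ n.choose k := by
  have : Fact p.Prime := ⟨hp⟩
  have := Choose.choose_modEq_choose_mod_mul_choose_div_nat (n := n) (k := k) (p := p)
  rwa [Nat.choose_eq_zero_of_lt h, zero_mul, Nat.modEq_zero_iff_dvd] at this

theorem cast_choose_succ_right_eq {R : Type*} [CommRing R] (a b : ℕ) :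
    (a.choose (b + 1) : R) * (b + 1) = a.choose b * (a - b) := by
  rcases le_or_gt b a with h | h
  · have := congrArg (Nat.cast : ℕ → R) (Nat.choose_succ_right_eq a b)
    push_cast [Nat.cast_sub h] at this
    exact this
  · simp [Nat.choose_eq_zero_of_lt h, Nat.choose_eq_zero_of_lt (Nat.lt_succ_of_lt h)]

theorem sum_range_mul_eq_sum_sum {M : Type*} [AddCommMonoid M] (f : ℕ → M) (m N : ℕ) :
    ∑ k ∈ range (m * N), f k = ∑ K ∈ range N, ∑ j ∈ range m, f (m * K + j) := by
  induction N with
  | zero => simp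
  | succ N ih => rw [Nat.mul_succ, sum_range_add, ih, sum_range_succ]

theorem three_pow_eq_zero {t : ℕ} (ht : 2 ≤ t) : (3 : ZMod 9) ^ t = 0 := by
  obtain ⟨u, rfl⟩ := Nat.exists_eq_add_of_le ht
  rw [pow_add, show (3 : ZMod 9) ^ 2 = 0 by decide, zero_mul]

theorem three_mul_pow_eq_zero (x : ZMod 9) {t : ℕ} (ht : 2 ≤ t) : (3 * x) ^ t = 0 := by
  rw [mul_pow, three_pow_eq_zero ht, zero_mul]

theorem one_add_three_mul_pow_mod_three (x : ZMod 9) (t : ℕ) :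
    (1 + 3 * x) ^ t = (1 + 3 * x) ^ (t % 3) :=
  pow_eq_pow_mod t (by ring_nf; reduce_mod_char)

theorem two_add_three_mul_pow_mod_six (x : ZMod 9) (t : ℕ) :
    (2 + 3 * x) ^ t = (2 + 3 * x) ^ (t % 6) :=
  pow_eq_pow_mod t (by ring_nf; reduce_mod_char)

theorem three_mul_one_add_three_mul_pow (x : ZMod 9) (t : ℕ) : 3 * (1 + 3 * x) ^ t = 3 := by
  induction t with
  | zero => simp
  | succ t ih => linear_combination (norm := ring_nf) (1 + 3 * x) * ih; reduce_mod_char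

theorem three_mul_two_add_three_mul_pow_of_even (x : ZMod 9) {t : ℕ} (ht : Even t) :
    3 * (2 + 3 * x) ^ t = 3 := by
  obtain ⟨k, rfl⟩ := ht
  rw [← two_mul, pow_mul, show (2 + 3 * x) ^ 2 = 1 + 3 * (1 + 4 * x + 3 * x ^ 2) by ring]
  exact three_mul_one_add_three_mul_pow _ k

section ChooseModNine

variable (a b : ℕ)

theorem three_mul_cast_choose_eq_zero {n k : ℕ} (h : n % 3 < k % 3) :
    3 * (n.choose k : ZMod 9) = 0 := by
  obtain ⟨c, hc⟩ := Nat.prime_three.dvd_choose_of_mod_lt h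
  rw [hc]; push_cast; ring_nf; reduce_mod_char

theorem cast_choose_three_mul_three_mul :
    ((3 * a).choose (3 * b) : ZMod 9) = a.choose b := by
  induction a generalizing b with
  | zero => cases b <;> simp [Nat.choose_eq_zero_of_lt]
  | succ a ih =>
    cases b with
    | zero => simp
    | succ b =>
      have pascal : (3 * a + 1 + 1 + 1).choose (3 * b + 1 + 1 + 1) = (3 * a).choose (3 * b)
          + 3 * (3 * a).choose (3 * b + 1) + 3 * (3 * a).choose (3 * b + 2)
          + (3 * a).choose (3 * b + 1 + 1 + 1) := by
        simp only [Nat.choose_succ_succ']; ring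
      rw [show 3 * (a + 1) = 3 * a + 1 + 1 + 1 by ring,
        show 3 * (b + 1) = 3 * b + 1 + 1 + 1 by ring, pascal, show 3 * b + 1 + 1 + 1 = 3 * (b + 1) by ring, Nat.choose_succ_succ']
      push_cast
      rw [three_mul_cast_choose_eq_zero (by omega), three_mul_cast_choose_eq_zero (by omega),
        ih, ih]
      ring

theorem cast_choose_three_mul_three_mul_add_one :
    ((3 * a).choose (3 * b + 1) : ZMod 9) = 3 * (a - b) * a.choose b := by
  have h := cast_choose_succ_right_eq (R := ZMod 9) (3 * a) (3 * b)
  push_cast at h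
  rw [cast_choose_three_mul_three_mul] at h
  -- `(1 + 3b)(1 + 6b) ≡ 1 (mod 9)`
  linear_combination (norm := ring_nf) (1 + 6 * (b : ZMod 9)) * h
  reduce_mod_char

theorem cast_choose_three_mul_three_mul_add_two :
    ((3 * a).choose (3 * b + 2) : ZMod 9) = 3 * (a - b) * a.choose b := by
  have h := cast_choose_succ_right_eq (R := ZMod 9) (3 * a) (3 * b + 1)
  push_cast at h
  rw [cast_choose_three_mul_three_mul_add_one] at h
  -- `(2 + 3b)(5 + 6b) ≡ 1 (mod 9)`
  linear_combination (norm := ring_nf) (5 + 6 * (b : ZMod 9)) * h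
  reduce_mod_char

theorem cast_choose_three_mul_add_one_three_mul :
    ((3 * a + 1).choose (3 * b) : ZMod 9) = (1 + 3 * b) * a.choose b := by
  cases b with
  | zero => simp
  | succ b =>
    rw [show 3 * (b + 1) = 3 * b + 2 + 1 by ring, Nat.choose_succ_succ']
    push_cast
    rw [cast_choose_three_mul_three_mul_add_two, show 3 * b + 2 + 1 = 3 * (b + 1) by ring,
      cast_choose_three_mul_three_mul]
    linear_combination -3 * cast_choose_succ_right_eq (R := ZMod 9) a b

theorem cast_choose_three_mul_add_one_three_mul_add_one :
    ((3 * a + 1).choose (3 * b + 1) : ZMod 9) = (1 + 3 * (a - b)) * a.choose b := by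
  rw [Nat.choose_succ_succ']
  push_cast
  rw [cast_choose_three_mul_three_mul, cast_choose_three_mul_three_mul_add_one]
  ring

theorem cast_choose_three_mul_add_one_three_mul_add_two :
    ((3 * a + 1).choose (3 * b + 2) : ZMod 9) = 6 * (a - b) * a.choose b := by
  rw [Nat.choose_succ_succ']
  push_cast
  rw [cast_choose_three_mul_three_mul_add_one, cast_choose_three_mul_three_mul_add_two]
  ring

theorem cast_choose_three_mul_add_two_three_mul :
    ((3 * a + 2).choose (3 * b) : ZMod 9) = a.choose b := by
  cases b with
  | zero => simp
  | succ b =>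
    rw [show 3 * (b + 1) = 3 * b + 2 + 1 by ring, Nat.choose_succ_succ']
    push_cast
    rw [cast_choose_three_mul_add_one_three_mul_add_two, show 3 * b + 2 + 1 = 3 * (b + 1) by ring,
      cast_choose_three_mul_add_one_three_mul]
    linear_combination (norm := (push_cast; ring_nf))
      -6 * cast_choose_succ_right_eq (R := ZMod 9) a b
    reduce_mod_char

theorem cast_choose_three_mul_add_two_three_mul_add_one :
    ((3 * a + 2).choose (3 * b + 1) : ZMod 9) = (2 + 3 * a) * a.choose b := by
  rw [Nat.choose_succ_succ']
  push_cast
  rw [cast_choose_three_mul_add_one_three_mul, cast_choose_three_mul_add_one_three_mul_add_one]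
  ring

theorem cast_choose_three_mul_add_two_three_mul_add_two :
    ((3 * a + 2).choose (3 * b + 2) : ZMod 9) = a.choose b := by
  rw [Nat.choose_succ_succ']
  push_cast
  rw [cast_choose_three_mul_add_one_three_mul_add_one,
    cast_choose_three_mul_add_one_three_mul_add_two]
  ring_nf; reduce_mod_char

end ChooseModNine

def aperyTerm (r s n k : ℕ) : ℕ := n.choose k ^ r * (n + k).choose k ^ s

theorem apery_eq_sum_range_of_lt {r s n N : ℕ} (hr : 0 < r) (h : n < N) :
    apery r s n = ∑ k ∈ range N, aperyTerm r s n k := by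
  refine sum_subset (range_subset_range.mpr h) fun k _ hk => ?_
  rw [mem_range, not_lt] at hk
  simp [Nat.choose_eq_zero_of_lt hk, hr.ne']

section Blocks

variable {r s : ℕ} (M K : ℕ)

theorem cast_sum_aperyTerm_three_mul (hr : 2 ≤ r) :
    (∑ κ ∈ range 3, aperyTerm r s (3 * M) (3 * K + κ) : ZMod 9) = aperyTerm r s M K := by
  simp only [sum_range_succ, sum_range_zero, zero_add, add_zero, aperyTerm]
  push_cast
  rw [cast_choose_three_mul_three_mul_add_one, cast_choose_three_mul_three_mul_add_two,
    mul_assoc 3, three_mul_pow_eq_zero _ hr,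
    show 3 * M + 3 * K = 3 * (M + K) by ring, cast_choose_three_mul_three_mul,
    cast_choose_three_mul_three_mul]
  ring

theorem cast_sum_aperyTerm_three_mul_add_one (hr : r % 3 = 2) (hs : s % 6 = 1) :
    (∑ κ ∈ range 3, aperyTerm r s (3 * M + 1) (3 * K + κ) : ZMod 9)
      = 3 * (1 + 2 * M) * aperyTerm r s M K := by
  simp only [sum_range_succ, sum_range_zero, zero_add, add_zero, aperyTerm]
  push_cast
  rw [show 3 * M + 1 + 3 * K = 3 * (M + K) + 1 by ring,
    show 3 * M + 1 + (3 * K + 1) = 3 * (M + K) + 2 by ring,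
    cast_choose_three_mul_add_one_three_mul, cast_choose_three_mul_add_one_three_mul,
    cast_choose_three_mul_add_one_three_mul_add_one,
    cast_choose_three_mul_add_two_three_mul_add_one,
    cast_choose_three_mul_add_one_three_mul_add_two,
    show (6 : ZMod 9) * (M - K) * M.choose K = 3 * (2 * (M - K) * M.choose K) by ring,
    three_mul_pow_eq_zero _ (by omega), mul_pow, mul_pow, mul_pow, mul_pow,
    one_add_three_mul_pow_mod_three _ r, one_add_three_mul_pow_mod_three _ s,
    one_add_three_mul_pow_mod_three _ r, two_add_three_mul_pow_mod_six _ s, hr, hs,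
    show s % 3 = 1 by omega]
  push_cast
  ring_nf
  reduce_mod_char

theorem cast_sum_aperyTerm_three_mul_add_two (hs : 0 < s) (hrs : Even r ∨ 2 ≤ s) :
    (∑ κ ∈ range 3, aperyTerm r s (3 * M + 2) (3 * K + κ) : ZMod 9) = aperyTerm r s M K := by
  simp only [sum_range_succ, sum_range_zero, zero_add, add_zero, aperyTerm]
  push_cast
  rw [show 3 * M + 2 + 3 * K = 3 * (M + K) + 2 by ring,
    show 3 * M + 2 + (3 * K + 1) = 3 * (M + K + 1) by ring,
    show 3 * M + 2 + (3 * K + 2) = 3 * (M + K + 1) + 1 by ring,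
    cast_choose_three_mul_add_two_three_mul, cast_choose_three_mul_add_two_three_mul,
    cast_choose_three_mul_add_two_three_mul_add_one, cast_choose_three_mul_three_mul_add_one,
    cast_choose_three_mul_add_two_three_mul_add_two,
    cast_choose_three_mul_add_one_three_mul_add_two]
  obtain rfl | hs2 : s = 1 ∨ 2 ≤ s := by omega
  · -- for `s = 1` the terms `κ = 1, 2` are `3x(2 + 3M)^r` and `6x`: they cancel only for even `r`
    have h3 := three_mul_two_add_three_mul_pow_of_even (M : ZMod 9) (hrs.resolve_right (by omega))
    rw [mul_pow]
    linear_combination (norm := (push_cast; ring_nf))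
      ((M + 1) * ((M + K + 1).choose K : ZMod 9) * (M.choose K : ZMod 9) ^ r) * h3
    reduce_mod_char
  · rw [mul_assoc 3, three_mul_pow_eq_zero _ hs2, show (6 : ZMod 9) = 3 * 2 from rfl,
      mul_assoc 3 2, mul_assoc 3, three_mul_pow_eq_zero _ hs2]
    ring

end Blocks

theorem cast_apery_three_mul_add {r s : ℕ} (hr : r % 3 = 2) (hs : s % 6 = 1)
    (hrs : Even r ∨ 2 ≤ s) {j : ℕ} (hj : j < 3) (M : ℕ) :
    (apery r s (3 * M + j) : ZMod 9)
      = (if j = 1 then 3 * (1 + 2 * (M : ZMod 9)) else 1) * apery r s M := by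
  rw [apery_eq_sum_range_of_lt (N := 3 * (M + 1)) (by omega) (by omega), sum_range_mul_eq_sum_sum,
    apery_eq_sum_range_of_lt (N := M + 1) (by omega) (by omega)]
  push_cast
  rw [mul_sum]
  refine sum_congr rfl fun K _ => ?_
  interval_cases j
  · simpa using cast_sum_aperyTerm_three_mul (r := r) (s := s) M K (by omega)
  · simpa using cast_sum_aperyTerm_three_mul_add_one M K hr hs
  · simpa using cast_sum_aperyTerm_three_mul_add_two M K (by omega) hrs

theorem sum_digits_succ (d : ℕ → ℕ) (L : ℕ) :
    ∑ i ∈ range (L + 1), d i * 3 ^ i = d 0 + 3 * ∑ i ∈ range L, d (i + 1) * 3 ^ i := by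
  rw [sum_range_succ', mul_sum, add_comm, pow_zero, mul_one]
  congr 1
  exact sum_congr rfl fun i _ => by ring

theorem cast_apery_sum_digits {r s : ℕ} (hr : r % 3 = 2) (hs : s % 6 = 1)
    (hrs : Even r ∨ 2 ≤ s) (L : ℕ) (d : ℕ → ℕ) (hd2 : ∀ i, d i ≤ 2)
    (hd0 : ∀ i, L ≤ i → d i = 0) :
    (apery r s (∑ i ∈ range L, d i * 3 ^ i) : ZMod 9)
      = ∏ i ∈ range L, if d i = 1 then 3 * (1 + 2 * (d (i + 1) : ZMod 9)) else 1 := by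
  induction L generalizing d with
  | zero => simp [apery]
  | succ L ih =>
    set M := ∑ i ∈ range L, d (i + 1) * 3 ^ i
    have hM : (3 * M : ZMod 9) = 3 * d 1 := by
      cases L with
      | zero => simp [M, hd0 1 le_rfl]
      | succ L => simp only [M, sum_digits_succ]; push_cast; ring_nf; reduce_mod_char
    rw [sum_digits_succ, add_comm, cast_apery_three_mul_add hr hs hrs (by have := hd2 0; omega),
      ih _ (fun i => hd2 _) (fun i hi => hd0 _ (by omega)), prod_range_succ', mul_comm]
    congr 1
    split_ifs
    · linear_combination 2 * hM
    · rfl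

def oneIndices (d : ℕ → ℕ) (m : ℕ) : Finset ℕ := (range (m + 1)).filter (d · = 1)

section Digits

variable {d : ℕ → ℕ} {m : ℕ}

@[simp]
theorem mem_oneIndices {i : ℕ} : i ∈ oneIndices d m ↔ i ≤ m ∧ d i = 1 := by
  simp [oneIndices]

theorem forall_le_eq_zero_or_eq_two_iff (hd2 : ∀ i, d i ≤ 2) :
    (∀ i ≤ m, d i = 0 ∨ d i = 2) ↔ oneIndices d m = ∅ := by
  simp only [eq_empty_iff_forall_notMem, mem_oneIndices, not_and]
  exact forall_congr' fun i => imp_congr_right fun _ => by have := hd2 i; omega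

theorem uniqueOcc_iff (hd2 : ∀ i, d i ≤ 2) {a : ℕ} (ha : a ≠ 1) :
    uniqueOcc d m a 1 ↔ ∃ p, oneIndices d m = {p} ∧ d (p + 1) = a := by
  constructor
  · rintro ⟨hocc, hrest⟩
    obtain ⟨ν, hν⟩ := card_eq_one.mp hocc
    have hmem : ν ∈ (Icc 1 (m + 1)).filter fun ν => d ν = a ∧ d (ν - 1) = 1 :=
      hν ▸ mem_singleton_self ν
    obtain ⟨hνIcc, hdν, hdν1⟩ := mem_filter.mp hmem
    have hν1 := (mem_Icc.mp hνIcc).1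
    refine ⟨ν - 1, eq_singleton_iff_unique_mem.mpr ⟨?_, fun i hi => ?_⟩,
      by rwa [Nat.sub_add_cancel hν1]⟩
    · exact mem_oneIndices.mpr ⟨by have := (mem_Icc.mp hνIcc).2; omega, hdν1⟩
    · obtain ⟨him, hdi⟩ := mem_oneIndices.mp hi
      by_contra hne
      have := hrest ν hνIcc ⟨hdν, hdν1⟩ i him (by rintro rfl; exact ha (hdν ▸ hdi)) hne
      omega
  · rintro ⟨p, hS, hp⟩
    have hone : ∀ i ≤ m, d i = 1 → i = p := fun i hi h =>
      mem_singleton.mp (hS ▸ mem_oneIndices.mpr ⟨hi, h⟩)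
    obtain ⟨hpm, hdp⟩ := mem_oneIndices.mp (hS ▸ mem_singleton_self p)
    refine ⟨card_eq_one.mpr ⟨p + 1, eq_singleton_iff_unique_mem.mpr ⟨?_, fun ν hν => ?_⟩⟩,
      ?_⟩
    · exact mem_filter.mpr ⟨mem_Icc.mpr ⟨by omega, by omega⟩, hp, hdp⟩
    · obtain ⟨hνIcc, -, hdν1⟩ := mem_filter.mp hν
      have := mem_Icc.mp hνIcc
      have := hone (ν - 1) (by omega) hdν1
      omega
    · rintro ν hνIcc ⟨-, hdν1⟩ i him hiν hiν1
      have := mem_Icc.mp hνIcc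
      have := hone (ν - 1) (by omega) hdν1
      have := hone i him
      have := hd2 i
      omega

theorem occ_eq_zero_of_oneIndices_eq_singleton {p b : ℕ} (hS : oneIndices d m = {p})
    (hb : d (p + 1) ≠ b) : occ d m b 1 = 0 := by
  refine card_eq_zero.mpr (filter_eq_empty_iff.mpr fun ν hνIcc ⟨hdν, hdν1⟩ => hb ?_)
  have := mem_Icc.mp hνIcc
  have hν : ν - 1 = p := mem_singleton.mp (hS ▸ mem_oneIndices.mpr ⟨by omega, hdν1⟩)
  rwa [← hν, Nat.sub_add_cancel this.1]

theorem uniqueOcc_zero_one_and_occ_iff (hd2 : ∀ i, d i ≤ 2) :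
    (uniqueOcc d m 0 1 ∧ occ d m 1 1 = 0 ∧ occ d m 2 1 = 0) ↔ uniqueOcc d m 0 1 := by
  refine ⟨And.left, fun h => ?_⟩
  obtain ⟨p, hS, hp⟩ := (uniqueOcc_iff hd2 (by norm_num)).mp h
  exact ⟨h, occ_eq_zero_of_oneIndices_eq_singleton hS (by omega),
    occ_eq_zero_of_oneIndices_eq_singleton hS (by omega)⟩

end Digits

theorem prod_three_mul_eq_zero {ι : Type*} (S : Finset ι) (f : ι → ZMod 9) (h : 2 ≤ #S) :
    ∏ i ∈ S, 3 * f i = 0 := by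
  rw [prod_mul_distrib, prod_const, three_pow_eq_zero h, zero_mul]

theorem modEq_nine_classification_of_cast {a : ℕ} {P₁ P₃ P₆ : Prop}
    (h : (a : ZMod 9) = 1 ∧ P₁ ∧ ¬P₃ ∧ ¬P₆ ∨ (a : ZMod 9) = 3 ∧ ¬P₁ ∧ P₃ ∧ ¬P₆ ∨
      (a : ZMod 9) = 6 ∧ ¬P₁ ∧ ¬P₃ ∧ P₆ ∨ (a : ZMod 9) = 0 ∧ ¬P₁ ∧ ¬P₃ ∧ ¬P₆) :
    (a ≡ 1 [MOD 9] ↔ P₁) ∧ (a ≡ 3 [MOD 9] ↔ P₃) ∧ (a ≡ 6 [MOD 9] ↔ P₆) ∧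
    (¬P₁ ∧ ¬P₃ ∧ ¬P₆ → 9 ∣ a) ∧ ¬a ≡ 2 [MOD 9] ∧ ¬a ≡ 4 [MOD 9] ∧ ¬a ≡ 5 [MOD 9] ∧
    ¬a ≡ 7 [MOD 9] ∧ ¬a ≡ 8 [MOD 9] := by
  simp only [← ZMod.natCast_eq_natCast_iff, ← ZMod.natCast_eq_zero_iff]
  rcases h with ⟨ha, h₁, h₃, h₆⟩ | ⟨ha, h₁, h₃, h₆⟩ | ⟨ha, h₁, h₃, h₆⟩ | ⟨ha, h₁, h₃, h₆⟩ <;>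
    simp only [ha, h₁, h₃, h₆] <;> decide

theorem apery_mod_nine_r2_s1_general (r s : ℕ)
    (hrs : (r % 6 = 2 ∧ s % 6 = 1) ∨ (r % 6 = 5 ∧ s % 6 = 1 ∧ 7 ≤ s))
    (n m : ℕ) (d : ℕ → ℕ) (hd2 : ∀ i, d i ≤ 2) (hd0 : ∀ i, m < i → d i = 0)
    (hn : n = ∑ i ∈ Finset.range (m + 1), d i * 3 ^ i) :
    (apery r s n ≡ 1 [MOD 9] ↔ (∀ i ≤ m, d i = 0 ∨ d i = 2)) ∧
    (apery r s n ≡ 3 [MOD 9] ↔ (uniqueOcc d m 0 1 ∧ occ d m 1 1 = 0 ∧ occ d m 2 1 = 0)) ∧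
    (apery r s n ≡ 6 [MOD 9] ↔ (uniqueOcc d m 2 1)) ∧
    (¬ (∀ i ≤ m, d i = 0 ∨ d i = 2) ∧ ¬ (uniqueOcc d m 0 1 ∧ occ d m 1 1 = 0 ∧ occ d m 2 1 = 0) ∧ ¬ (uniqueOcc d m 2 1) → 9 ∣ apery r s n) ∧
    ¬ (apery r s n ≡ 2 [MOD 9]) ∧
    ¬ (apery r s n ≡ 4 [MOD 9]) ∧
    ¬ (apery r s n ≡ 5 [MOD 9]) ∧
    ¬ (apery r s n ≡ 7 [MOD 9]) ∧
    ¬ (apery r s n ≡ 8 [MOD 9]) := by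
  have hparity : Even r ∨ 2 ≤ s := by
    rcases hrs with ⟨hr, -⟩ | ⟨-, -, hs⟩
    exacts [Or.inl (Nat.even_iff.mpr (by omega)), Or.inr (by omega)]
  have hval : (apery r s n : ZMod 9)
      = ∏ i ∈ oneIndices d m, 3 * (1 + 2 * (d (i + 1) : ZMod 9)) := by
    rw [hn, cast_apery_sum_digits (by omega) (by omega) hparity (m + 1) d hd2 hd0, oneIndices,
      prod_filter]
  rw [uniqueOcc_zero_one_and_occ_iff hd2, forall_le_eq_zero_or_eq_two_iff hd2,
    uniqueOcc_iff hd2 (by norm_num), uniqueOcc_iff hd2 (by norm_num)]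
  apply modEq_nine_classification_of_cast
  obtain hS | hS | hS :
      #(oneIndices d m) = 0 ∨ #(oneIndices d m) = 1 ∨ 2 ≤ #(oneIndices d m) := by omega
  · simp [hval, card_eq_zero.mp hS]
  · obtain ⟨p, hS⟩ := card_eq_one.mp hS
    rw [hS, prod_singleton] at hval
    have := hd2 (p + 1)
    interval_cases h : d (p + 1) <;> simp [hval, hS, h] <;> decide
  · have hS_ne_singleton : ∀ p, oneIndices d m ≠ {p} := fun p h => by simp [h] at hS
    have hS_ne_empty : oneIndices d m ≠ ∅ := fun h => by simp [h] at hS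
    simp [hval, prod_three_mul_eq_zero _ _ hS, hS_ne_singleton, hS_ne_empty]

/-- Apéry numbers mod 9 for `r ≡ 2 (mod 6)`, `s ≡ 1 (mod 6)`, or
`r ≡ 5 (mod 6)`, `s ≡ 1 (mod 6)`, `s ≥ 7` (covering the classical case `a_n(2,1)`). -/
theorem apery_mod_nine_r2_s1 (r s : ℕ) (hr : 0 < r) (hs : 0 < s)
    (hrs : (r % 6 = 2 ∧ s % 6 = 1) ∨ (r % 6 = 5 ∧ s % 6 = 1 ∧ 7 ≤ s))
    (n m : ℕ) (d : ℕ → ℕ) (hd2 : ∀ i, d i ≤ 2) (hd0 : ∀ i, m < i → d i = 0)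
    (hn : n = ∑ i ∈ Finset.range (m + 1), d i * 3 ^ i) :
    (apery r s n ≡ 1 [MOD 9] ↔ (∀ i ≤ m, d i = 0 ∨ d i = 2)) ∧
    (apery r s n ≡ 3 [MOD 9] ↔ (uniqueOcc d m 0 1 ∧ occ d m 1 1 = 0 ∧ occ d m 2 1 = 0)) ∧
    (apery r s n ≡ 6 [MOD 9] ↔ (uniqueOcc d m 2 1)) ∧
    (¬ (∀ i ≤ m, d i = 0 ∨ d i = 2) ∧ ¬ (uniqueOcc d m 0 1 ∧ occ d m 1 1 = 0 ∧ occ d m 2 1 = 0) ∧ ¬ (uniqueOcc d m 2 1) → 9 ∣ apery r s n) ∧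
    ¬ (apery r s n ≡ 2 [MOD 9]) ∧
    ¬ (apery r s n ≡ 4 [MOD 9]) ∧
    ¬ (apery r s n ≡ 5 [MOD 9]) ∧
    ¬ (apery r s n ≡ 7 [MOD 9]) ∧
    ¬ (apery r s n ≡ 8 [MOD 9]) :=
  apery_mod_nine_r2_s1_general r s hrs n m d hd2 hd0 hn
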